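/- arXiv:2102.02517 — 6 statements merged into one kernel-verified Lean document; each statement's English description precedes it below -/
import Mathlib

section
/- Let m ≥ 1, let a_1, …, a_m be complex numbers, and let b_1, …, b_m be pairwise distinct complex numbers of modulus 1. If the sequence n ↦ Σ_{k=1}^m a_k · b_k^n tends to 0 as n → ∞, then a_k = 0 for every k. -/
/-!
Dividing by `b j ^ n` does not change the norm of the sequence, so
`T n = ∑ k, a k * (b k / b j) ^ n` also tends to `0`, and hence so do its Cesàro means.
On the other hand, the Cesàro means of `c ^ n` tend to `1` for `c = 1` and to `0` for any other
`c` with `‖c‖ ≤ 1` (the geometric sums stay bounded), so the Cesàro means of `T` tend to `a j`.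
-/

open Filter Finset Topology

section DivisionRing

variable {𝕜 : Type*} [NormedDivisionRing 𝕜] [NormedAlgebra ℝ 𝕜]

theorem tendsto_cesaro_pow_of_norm_le_one_of_ne_one {c : 𝕜} (hc : ‖c‖ ≤ 1) (hc1 : c ≠ 1) :
    Tendsto (fun N : ℕ => (N⁻¹ : ℝ) • ∑ n ∈ range N, c ^ n) atTop (𝓝 0) := by
  refine tendsto_inv_atTop_nhds_zero_nat.zero_smul_isBoundedUnder_le
    (isBoundedUnder_of ⟨2 / ‖c - 1‖, fun N => ?_⟩)
  have hpow : ‖c ^ N - 1‖ ≤ 2 :=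
    calc ‖c ^ N - 1‖ ≤ ‖c‖ ^ N + ‖(1 : 𝕜)‖ := by rw [← norm_pow]; exact norm_sub_le _ _
      _ ≤ 1 + 1 := by rw [norm_one]; gcongr; exact pow_le_one₀ (norm_nonneg c) hc
      _ = 2 := one_add_one_eq_two
  calc ‖∑ n ∈ range N, c ^ n‖ = ‖c ^ N - 1‖ / ‖c - 1‖ := by rw [geom_sum_eq hc1, norm_div]
    _ ≤ 2 / ‖c - 1‖ := by gcongr

theorem tendsto_cesaro_sum_mul_pow {ι : Type*} [Fintype ι] (a c : ι → 𝕜)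
    (hc : ∀ k, ‖c k‖ ≤ 1) {j : ι} (hcj : c j = 1) (hc1 : ∀ k, k ≠ j → c k ≠ 1) :
    Tendsto (fun N : ℕ => (N⁻¹ : ℝ) • ∑ n ∈ range N, ∑ k, a k * c k ^ n) atTop (𝓝 (a j)) := by
  classical
  have hterm : ∀ k, Tendsto (fun N : ℕ => a k * ((N⁻¹ : ℝ) • ∑ n ∈ range N, c k ^ n)) atTop
      (𝓝 (if k = j then a j else 0)) := fun k => by
    split_ifs with hk
    · subst hk
      simpa only [hcj, one_pow, mul_one] using
        ((tendsto_const_nhds (x := (1 : 𝕜))).cesaro_smul).const_mul (a k)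
    · simpa only [mul_zero] using
        (tendsto_cesaro_pow_of_norm_le_one_of_ne_one (hc k) (hc1 k hk)).const_mul (a k)
  have hsum := tendsto_finsetSum univ fun k (_ : k ∈ univ) => hterm k
  rw [sum_ite_eq' univ j, if_pos (mem_univ j)] at hsum
  refine hsum.congr fun N => ?_
  simp only [sum_comm (s := range N), smul_sum, mul_sum, mul_smul_comm]

end DivisionRing

variable {𝕜 : Type*} [NormedField 𝕜] [NormedAlgebra ℝ 𝕜]

theorem eq_zero_of_tendsto_sum_mul_pow {ι : Type*} [Fintype ι] (a b : ι → 𝕜)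
    (hb : ∀ k, ‖b k‖ ≤ 1) (hinj : Function.Injective b)
    (h : Tendsto (fun n : ℕ => ∑ k, a k * b k ^ n) atTop (𝓝 0)) {j : ι} (hj : ‖b j‖ = 1) :
    a j = 0 := by
  have hj0 : b j ≠ 0 := norm_ne_zero_iff.1 (hj ▸ one_ne_zero)
  have hnorm : ∀ n, ‖∑ k, a k * (b k / b j) ^ n‖ = ‖∑ k, a k * b k ^ n‖ := fun n => by
    simp only [div_pow, ← mul_div_assoc, ← sum_div, norm_div, norm_pow, hj, one_pow, div_one]
  have htwist : Tendsto (fun n : ℕ => ∑ k, a k * (b k / b j) ^ n) atTop (𝓝 0) := by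
    rw [tendsto_zero_iff_norm_tendsto_zero] at h ⊢
    simpa only [hnorm] using h
  refine tendsto_nhds_unique ?_ htwist.cesaro_smul
  refine tendsto_cesaro_sum_mul_pow a (fun k => b k / b j) (fun k => ?_) (div_self hj0)
    fun k hk hkj => hk (hinj ((div_eq_one_iff_eq hj0).1 hkj))
  rw [norm_div, hj, div_one]
  exact hb k

theorem stmt0_general (m : ℕ) (a b : Fin m → ℂ)
    (hb : ∀ k, ‖b k‖ = 1)
    (hdist : Function.Injective b)
    (h : Filter.Tendsto (fun n : ℕ => ∑ k, a k * (b k) ^ n) Filter.atTop (nhds 0)) :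
    ∀ k, a k = 0 := fun k =>
  eq_zero_of_tendsto_sum_mul_pow a b (fun k => (hb k).le) hdist h (hb k)

/-- If `a₁,…,a_m` are complex numbers and `b₁,…,b_m` are pairwise distinct complex
numbers of modulus `1` such that `∑ k, a k * b k ^ n → 0` as `n → ∞`, then all `a k = 0`. -/
theorem stmt0 (m : ℕ) (hm : 1 ≤ m) (a b : Fin m → ℂ)
    (hb : ∀ k, ‖b k‖ = 1)
    (hdist : Function.Injective b)
    (h : Filter.Tendsto (fun n : ℕ => ∑ k, a k * (b k) ^ n) Filter.atTop (nhds 0)) :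
    ∀ k, a k = 0 :=
  stmt0_general m a b hb hdist h
end

section
/- Let m ≥ 1, let q_1, …, q_m be polynomial functions ℕ → ℂ (restrictions to ℕ of complex polynomials), and let b_1, …, b_m be pairwise distinct complex numbers of modulus 1. If Σ_{k=1}^m q_k(n) · b_k^n tends to 0 as n → ∞, then every polynomial q_k is identically zero. -/
/-!
Write `f n = ∑ z ∈ s, q z (n) * z ^ n`. For a fixed frequency `c ∈ s`, the sequence
`f (n + 1) - c * f n` is again of this form, with coefficient polynomials
`z • q z (X + 1) - c • q z`. At `z = c` this lowers the degree, while at every `z ≠ c` it is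
injective (compare leading coefficients). Inducting on the degree of `q c` therefore kills
all `q z` with `z ≠ c`, and then `q c (n) * c ^ n → 0` with `‖c‖ ≥ 1` forces `q c = 0`,
because a nonconstant polynomial is unbounded on `ℕ`.
-/

open Polynomial Filter Topology Finset

namespace Polynomial

variable {R : Type*} [CommRing R]

theorem degree_smul_taylor_sub_smul_lt (r c : R) {p : R[X]} (hp : p ≠ 0) :
    (c • taylor r p - c • p).degree < p.degree := by
  rw [← smul_sub]
  refine (degree_smul_le _ _).trans_lt ?_
  simpa only [degree_taylor] using degree_sub_lt_left (degree_taylor p r)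
    ((taylor_eq_zero r p).not.mpr hp) (leadingCoeff_taylor r p)

theorem eq_zero_of_smul_taylor_sub_smul_eq_zero [IsDomain R] {r z c : R} (hzc : z ≠ c) {p : R[X]}
    (h : z • taylor r p - c • p = 0) : p = 0 := by
  have hlc := congrArg (coeff · p.natDegree) h
  simp only [coeff_sub, coeff_smul, coeff_taylor_natDegree, coeff_natDegree, smul_eq_mul,
    coeff_zero, ← sub_mul, mul_eq_zero, sub_eq_zero] at hlc
  exact leadingCoeff_eq_zero.1 (hlc.resolve_left hzc)

end Polynomial

/-- Indexing by the frequencies themselves builds in their distinctness. -/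
def expPoly {R : Type*} [CommRing R] (s : Finset R) (q : R → R[X]) (n : ℕ) : R :=
  ∑ z ∈ s, (q z).eval (n : R) * z ^ n

section

variable {R : Type*} [CommRing R]

theorem expPoly_insert_of_eq_zero [DecidableEq R] {s : Finset R} {q : R → R[X]} {c : R}
    (hc : q c = 0) : expPoly (insert c s) q = expPoly s q := by
  ext n
  exact sum_insert_zero (by simp [hc])

theorem expPoly_smul_taylor_sub_smul (s : Finset R) (q : R → R[X]) (c : R) (n : ℕ) :
    expPoly s (fun z => z • taylor 1 (q z) - c • q z) n
      = expPoly s q (n + 1) - c * expPoly s q n := by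
  simp only [expPoly, mul_sum, ← sum_sub_distrib]
  refine sum_congr rfl fun z _ => ?_
  simp only [eval_sub, eval_smul, taylor_eval, smul_eq_mul, Nat.cast_succ]
  ring

end

theorem eq_zero_of_tendsto_expPoly_insert {𝕜 : Type*} [NormedField 𝕜] [DecidableEq 𝕜]
    {s : Finset 𝕜} {c : 𝕜} (hc : c ∉ s)
    (hs : ∀ q, Tendsto (expPoly s q) atTop (𝓝 0) → ∀ z ∈ s, q z = 0)
    (q : 𝕜 → 𝕜[X]) (hq : Tendsto (expPoly (insert c s) q) atTop (𝓝 0)) :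
    ∀ z ∈ s, q z = 0 := by
  suffices ∀ p q, q c = p → Tendsto (expPoly (insert c s) q) atTop (𝓝 0) → ∀ z ∈ s, q z = 0 from
    this _ q rfl hq
  intro p
  induction p using degree_lt_wf.induction with | _ p ihp => ?_
  rintro q rfl hq
  by_cases hqc : q c = 0
  · exact hs q (by rwa [expPoly_insert_of_eq_zero hqc] at hq)
  set Q := fun z => z • taylor 1 (q z) - c • q z
  have hQ : Tendsto (expPoly (insert c s) Q) atTop (𝓝 0) := by
    simp only [Q, funext (expPoly_smul_taylor_sub_smul _ q c)]
    simpa using (hq.comp (tendsto_add_atTop_nat 1)).sub (hq.const_mul c)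
  intro z hz
  exact eq_zero_of_smul_taylor_sub_smul_eq_zero (ne_of_mem_of_not_mem hz hc)
    (ihp (Q c) (degree_smul_taylor_sub_smul_lt 1 c hqc) Q rfl hQ z hz)

namespace Polynomial

variable {𝕜 : Type*} [RCLike 𝕜]

theorem eq_zero_of_tendsto_eval_natCast {p : 𝕜[X]}
    (h : Tendsto (fun n : ℕ => p.eval (n : 𝕜)) atTop (𝓝 0)) : p = 0 := by
  rcases lt_or_ge 0 p.degree with hdeg | hdeg
  · have hn : Tendsto (fun n : ℕ => ‖(n : 𝕜)‖) atTop atTop := by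
      simpa only [RCLike.norm_natCast] using tendsto_natCast_atTop_atTop
    exact absurd h.norm (not_tendsto_nhds_of_tendsto_atTop (p.tendsto_norm_atTop hdeg hn) _)
  · rw [eq_C_of_degree_le_zero hdeg] at h ⊢
    simpa using tendsto_nhds_unique tendsto_const_nhds (by simpa only [eval_C] using h)

theorem eq_zero_of_tendsto_eval_mul_pow {p : 𝕜[X]} {z : 𝕜} (hz : 1 ≤ ‖z‖)
    (h : Tendsto (fun n : ℕ => p.eval (n : 𝕜) * z ^ n) atTop (𝓝 0)) : p = 0 := by
  refine eq_zero_of_tendsto_eval_natCast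
    (squeeze_zero_norm (fun n => ?_) (by simpa only [norm_zero] using h.norm))
  rw [norm_mul, norm_pow]
  exact le_mul_of_one_le_right (norm_nonneg _) (one_le_pow₀ hz)

end Polynomial

theorem eq_zero_of_tendsto_expPoly {𝕜 : Type*} [RCLike 𝕜] (s : Finset 𝕜)
    (hs : ∀ z ∈ s, 1 ≤ ‖z‖) (q : 𝕜 → 𝕜[X]) (h : Tendsto (expPoly s q) atTop (𝓝 0)) :
    ∀ z ∈ s, q z = 0 := by
  classical
  induction s using Finset.induction_on generalizing q with
  | empty => simp
  | insert c s hc ih =>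
    have hqs := eq_zero_of_tendsto_expPoly_insert hc
      (ih fun z hz => hs z (mem_insert_of_mem hz)) q h
    have hqc : q c = 0 := by
      refine eq_zero_of_tendsto_eval_mul_pow (hs c (mem_insert_self c s)) ?_
      refine h.congr fun n => ?_
      rw [expPoly, sum_insert hc, sum_eq_zero fun z hz => by simp [hqs z hz], add_zero]
    simpa [forall_mem_insert] using ⟨hqc, hqs⟩

theorem stmt1_general (m : ℕ) (q : Fin m → Polynomial ℂ) (b : Fin m → ℂ)
    (hb : ∀ k, ‖b k‖ = 1)
    (hdist : Function.Injective b)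
    (h : Filter.Tendsto (fun n : ℕ => ∑ k, (q k).eval (n : ℂ) * (b k) ^ n)
      Filter.atTop (nhds 0)) :
    ∀ k, q k = 0 := by
  classical
  set Q := Function.extend b q 0
  have hsum : (fun n : ℕ => ∑ k, (q k).eval (n : ℂ) * (b k) ^ n) = expPoly (univ.image b) Q := by
    ext n
    rw [expPoly, sum_image hdist.injOn]
    simp only [Q, hdist.extend_apply]
  have hQ := eq_zero_of_tendsto_expPoly _ (by simp [hb]) Q (hsum ▸ h)
  intro k
  simpa only [Q, hdist.extend_apply] using hQ (b k) (mem_image_of_mem b (mem_univ k))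

/-- If `q₁,…,q_m` are complex polynomials and `b₁,…,b_m` are pairwise distinct complex
numbers of modulus `1` such that `∑ k, q k (n) * b k ^ n → 0` as `n → ∞`, then all
polynomials `q k` are identically zero. -/
theorem stmt1 (m : ℕ) (hm : 1 ≤ m) (q : Fin m → Polynomial ℂ) (b : Fin m → ℂ)
    (hb : ∀ k, ‖b k‖ = 1)
    (hdist : Function.Injective b)
    (h : Filter.Tendsto (fun n : ℕ => ∑ k, (q k).eval (n : ℂ) * (b k) ^ n)
      Filter.atTop (nhds 0)) :
    ∀ k, q k = 0 :=
  stmt1_general m q b hb hdist h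
end

section
/- Let V be a finite-dimensional real inner product space, let (α_i)_{i∈I} be a basis of the dual space V*, and let (e_i)_{i∈I} ⊂ V be the dual basis, i.e. α_i(e_j) = δ_{ij}. Then there exists a constant c > 0, depending only on the basis, such that: for all X, H ∈ V, if α_i(H) ≥ 0 for every i and ⟨e_i, H − X⟩ ≤ 0 for every i, then ‖H‖ ≤ c‖X‖. -/
/-!
Expanding `H = ∑ α_i(H) e_i` in the dual basis gives `‖H‖² = ∑ α_i(H) ⟨e_i, H⟩`. Since the
coefficients `α_i(H)` are nonnegative and `⟨e_i, H⟩ ≤ ⟨e_i, X⟩`, this is at most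
`∑ α_i(H) ⟨e_i, X⟩ ≤ (∑ ‖α_i‖ ‖e_i‖) ‖H‖ ‖X‖`; dividing by `‖H‖` gives the bound.
-/

open Module

theorem Module.Basis.sum_apply_smul_of_dual {R M ι : Type*} [CommSemiring R] [AddCommMonoid M]
    [Module R M] [Projective R M] [Fintype ι] [DecidableEq ι] (α : Basis ι R (Dual R M))
    {e : ι → M} (hdual : ∀ i j, α i (e j) = if i = j then (1 : R) else 0) (v : M) :
    ∑ i, α i v • e i = v := by
  refine eval_apply_injective R (α.ext fun j => ?_)
  simp [hdual]

theorem norm_sq_le_sum_mul_inner_of_inner_le {V ι : Type*} [NormedAddCommGroup V]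
    [InnerProductSpace ℝ V] [Fintype ι] {a : ι → ℝ} {e : ι → V} {H X : V}
    (hH : ∑ i, a i • e i = H) (ha : ∀ i, 0 ≤ a i)
    (he : ∀ i, inner ℝ (e i) H ≤ inner ℝ (e i) X) :
    ‖H‖ ^ 2 ≤ ∑ i, a i * inner ℝ (e i) X :=
  calc ‖H‖ ^ 2 = inner ℝ H H := (real_inner_self_eq_norm_sq H).symm
    _ = ∑ i, a i * inner ℝ (e i) H := by
        nth_rw 1 [← hH]
        simp only [sum_inner, real_inner_smul_left]
    _ ≤ ∑ i, a i * inner ℝ (e i) X :=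
        Finset.sum_le_sum fun i _ => mul_le_mul_of_nonneg_left (he i) (ha i)

theorem sum_apply_mul_inner_le {V ι : Type*} [NormedAddCommGroup V] [InnerProductSpace ℝ V]
    [Fintype ι] (φ : ι → V →L[ℝ] ℝ) (e : ι → V) (H X : V) :
    ∑ i, φ i H * inner ℝ (e i) X ≤ (∑ i, ‖φ i‖ * ‖e i‖) * (‖H‖ * ‖X‖) := by
  rw [Finset.sum_mul]
  refine Finset.sum_le_sum fun i _ => ?_
  calc φ i H * inner ℝ (e i) X ≤ |φ i H| * |inner ℝ (e i) X| := by
        rw [← abs_mul]; exact le_abs_self _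
    _ ≤ (‖φ i‖ * ‖H‖) * (‖e i‖ * ‖X‖) := by
        gcongr
        · exact (φ i).le_opNorm H
        · exact abs_real_inner_le_norm _ _
    _ = ‖φ i‖ * ‖e i‖ * (‖H‖ * ‖X‖) := by ring

/-- Let `(α_i)` be a basis of the dual of a finite-dimensional real inner product
space `V` and `(e_i)` the dual basis of `V`.  There is a constant `c > 0`, depending
only on the basis, such that whenever `α_i(H) ≥ 0` for all `i` and `⟨e_i, H - X⟩ ≤ 0`
for all `i`, one has `‖H‖ ≤ c ‖X‖`. -/
theorem stmt6 {V : Type*} [NormedAddCommGroup V] [InnerProductSpace ℝ V]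
    [FiniteDimensional ℝ V]
    {ι : Type*} [DecidableEq ι] (α : Module.Basis ι ℝ (Module.Dual ℝ V)) (e : ι → V)
    (hdual : ∀ i j, α i (e j) = if i = j then (1 : ℝ) else 0) :
    ∃ c : ℝ, 0 < c ∧ ∀ X H : V,
      (∀ i, 0 ≤ α i H) → (∀ i, (inner ℝ (e i) (H - X) : ℝ) ≤ 0) → ‖H‖ ≤ c * ‖X‖ := by
  have : Fintype ι := FiniteDimensional.fintypeBasisIndex α
  let φ : ι → V →L[ℝ] ℝ := fun i => LinearMap.toContinuousLinearMap (α i)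
  set C := ∑ i, ‖φ i‖ * ‖e i‖
  refine ⟨C + 1, by positivity, fun X H hα hHX => ?_⟩
  have he : ∀ i, inner ℝ (e i) H ≤ inner ℝ (e i) X := fun i => by
    simpa [inner_sub_right] using hHX i
  have hsq : ‖H‖ ^ 2 ≤ C * ‖X‖ * ‖H‖ := by
    calc ‖H‖ ^ 2 ≤ ∑ i, φ i H * inner ℝ (e i) X :=
          norm_sq_le_sum_mul_inner_of_inner_le (α.sum_apply_smul_of_dual hdual H) hα he
      _ ≤ C * (‖H‖ * ‖X‖) := sum_apply_mul_inner_le φ e H X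
      _ = C * ‖X‖ * ‖H‖ := by ring
  have hC : 0 ≤ C * ‖X‖ := by positivity
  nlinarith [norm_nonneg H, norm_nonneg X]
end

section
/- Let V be a finite-dimensional real inner product space, let (α_i)_{i∈I} be a basis of V*, and let (e_i)_{i∈I} ⊂ V be the dual basis. If H ∈ V satisfies α_i(H) ≥ 0 for every i and ⟨e_i, H⟩ ≤ 0 for every i, then H = 0. -/
open Module

namespace Module.Basis

variable {R M ι : Type*} [CommSemiring R] [AddCommMonoid M] [Module R M] [DecidableEq ι]

theorem repr_apply_of_dual_eq_ite (α : Basis ι R (Dual R M)) {e : ι → M}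
    (hdual : ∀ i j, α i (e j) = if i = j then (1 : R) else 0) (f : Dual R M) (j : ι) :
    α.repr f j = f (e j) := by
  have : α.coord j = Dual.eval R M (e j) := α.ext fun i => by
    simp [hdual, Finsupp.single_apply]
  exact LinearMap.congr_fun this f

theorem dual_apply_eq_sum_of_dual_eq_ite (α : Basis ι R (Dual R M)) {e : ι → M}
    (hdual : ∀ i j, α i (e j) = if i = j then (1 : R) else 0) (f : Dual R M) (x : M) :
    f x = ∑ i ∈ (α.repr f).support, f (e i) * α i x := by
  conv_lhs => rw [← α.linearCombination_repr f]
  simp [Finsupp.linearCombination_apply, Finsupp.sum, α.repr_apply_of_dual_eq_ite hdual]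

end Module.Basis

theorem stmt7_general {V : Type*} [NormedAddCommGroup V] [InnerProductSpace ℝ V]
    {ι : Type*} [DecidableEq ι] (α : Module.Basis ι ℝ (Module.Dual ℝ V)) (e : ι → V)
    (hdual : ∀ i j, α i (e j) = if i = j then (1 : ℝ) else 0)
    (H : V) (h1 : ∀ i, 0 ≤ α i H) (h2 : ∀ i, (inner ℝ (e i) H : ℝ) ≤ 0) :
    H = 0 := by
  have hnorm : inner ℝ H H = ∑ i ∈ (α.repr (innerₛₗ ℝ H)).support, inner ℝ (e i) H * α i H := by
    simpa [real_inner_comm H] using α.dual_apply_eq_sum_of_dual_eq_ite hdual (innerₛₗ ℝ H) H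
  refine real_inner_self_nonpos.mp (hnorm ▸ Finset.sum_nonpos fun i _ => ?_)
  exact mul_nonpos_of_nonpos_of_nonneg (h2 i) (h1 i)

/-- Let `(α_i)` be a basis of the dual of a finite-dimensional real inner product
space `V` and `(e_i)` the dual basis of `V`.  If `α_i(H) ≥ 0` and `⟨e_i, H⟩ ≤ 0` for
every `i`, then `H = 0`. -/
theorem stmt7 {V : Type*} [NormedAddCommGroup V] [InnerProductSpace ℝ V]
    [FiniteDimensional ℝ V]
    {ι : Type*} [DecidableEq ι] (α : Module.Basis ι ℝ (Module.Dual ℝ V)) (e : ι → V)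
    (hdual : ∀ i j, α i (e j) = if i = j then (1 : ℝ) else 0)
    (H : V) (h1 : ∀ i, 0 ≤ α i H) (h2 : ∀ i, (inner ℝ (e i) H : ℝ) ≤ 0) :
    H = 0 :=
  stmt7_general α e hdual H h1 h2
end

section
/- Let V be a finite-dimensional real inner product space and let (v_α)_{α∈I} be a basis of V which is obtuse, i.e. ⟨v_α, v_β⟩ ≤ 0 for all α ≠ β. Let (w_α)_{α∈I} be the dual basis with respect to the inner product, i.e. ⟨v_α, w_β⟩ = δ_{αβ}. Let I = I₁ ⊔ I₂ be a partition with I₂ nonempty, and let X ∈ V satisfy ⟨v_α, X⟩ ≥ 0 for all α ∈ I. Then there is no H ∈ V satisfying simultaneously: ⟨v_α, H⟩ > 0 for all α ∈ I₁; ⟨v_α, H⟩ ≤ 0 for all α ∈ I₂; ⟨w_α, H − X⟩ > 0 for all α ∈ I₂; and ⟨w_α, H − X⟩ ≤ 0 for all α ∈ I₁. -/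
/-!
Write `H - X = Z + W`, where `Z` and `W` collect the terms of the `v`-expansion of `H - X` indexed
by `I₂` and `I₁`; the coefficients are `⟨w_α, H - X⟩`, positive on `I₂` and nonpositive on `I₁`.
Obtuseness gives `⟨Z, W⟩ ≥ 0`, while `⟨v_α, H - X⟩ ≤ 0` on `I₂` gives `⟨Z, H - X⟩ ≤ 0`. Hence
`‖Z‖² ≤ 0`, so `Z = 0`, contradicting that its coefficients on the nonempty set `I₂` are positive.
-/

section

variable {ι V : Type*} [NormedAddCommGroup V] [InnerProductSpace ℝ V]

lemma Module.Basis.repr_apply_eq_inner [DecidableEq ι] (b : Module.Basis ι ℝ V) {w : ι → V}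
    (hdual : ∀ α β, (inner ℝ (b α) (w β) : ℝ) = if α = β then 1 else 0) (x : V) (α : ι) :
    b.repr x α = inner ℝ (w α) x := by
  have : b.coord α = innerₛₗ ℝ (w α) := b.ext fun β => by
    rw [innerₛₗ_apply_apply, real_inner_comm, hdual, Basis.coord_apply, Basis.repr_self,
      Finsupp.single_apply]
  exact LinearMap.congr_fun this x

lemma inner_linearCombination_nonneg {v : ι → V} {f g : ι →₀ ℝ} (hf : 0 ≤ f) (hg : g ≤ 0)
    (hv : ∀ i ∈ f.support, ∀ j ∈ g.support, (inner ℝ (v i) (v j) : ℝ) ≤ 0) :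
    0 ≤ (inner ℝ (Finsupp.linearCombination ℝ v f) (Finsupp.linearCombination ℝ v g) : ℝ) := by
  rw [Finsupp.linearCombination_apply, Finsupp.sum, sum_inner]
  simp only [Finsupp.linearCombination_apply, Finsupp.sum, inner_sum, real_inner_smul_left,
    real_inner_smul_right]
  exact Finset.sum_nonneg fun i hi => Finset.sum_nonneg fun j hj =>
    mul_nonneg_of_nonpos_of_nonpos (hg j) (mul_nonpos_of_nonneg_of_nonpos (hf i) (hv i hi j hj))

lemma inner_linearCombination_nonpos {v : ι → V} {f : ι →₀ ℝ} {x : V} (hf : 0 ≤ f)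
    (hv : ∀ i ∈ f.support, (inner ℝ (v i) x : ℝ) ≤ 0) :
    (inner ℝ (Finsupp.linearCombination ℝ v f) x : ℝ) ≤ 0 := by
  simp only [Finsupp.linearCombination_apply, Finsupp.sum, sum_inner, real_inner_smul_left]
  exact Finset.sum_nonpos fun i hi => mul_nonpos_of_nonneg_of_nonpos (hf i) (hv i hi)
end

theorem stmt8_general {V : Type*} [NormedAddCommGroup V] [InnerProductSpace ℝ V]
    {ι : Type*} [DecidableEq ι] (b : Module.Basis ι ℝ V)
    (hobtuse : ∀ α β, α ≠ β → (inner ℝ (b α) (b β) : ℝ) ≤ 0)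
    (w : ι → V)
    (hdual : ∀ α β, (inner ℝ (b α) (w β) : ℝ) = if α = β then 1 else 0)
    (s : Set ι) (hs : sᶜ.Nonempty)
    (X : V) (hX : ∀ α, 0 ≤ (inner ℝ (b α) X : ℝ)) :
    ¬ ∃ H : V,
      (∀ α ∈ s, 0 < (inner ℝ (b α) H : ℝ)) ∧
      (∀ α ∉ s, (inner ℝ (b α) H : ℝ) ≤ 0) ∧
      (∀ α ∉ s, 0 < (inner ℝ (w α) (H - X) : ℝ)) ∧
      (∀ α ∈ s, (inner ℝ (w α) (H - X) : ℝ) ≤ 0) := by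
  classical
  rintro ⟨H, -, hH, hpos, hnonpos⟩
  obtain ⟨α₀, hα₀ : α₀ ∉ s⟩ := hs
  set f := b.repr (H - X)
  have hf : ∀ α, f α = inner ℝ (w α) (H - X) := b.repr_apply_eq_inner hdual (H - X)
  set P := f.filter (· ∉ s)
  set N := f.filter (· ∈ s)
  set Z := Finsupp.linearCombination ℝ b P
  have hP : 0 ≤ P := fun α => by
    by_cases hα : α ∈ s <;> simp [P, hα, hf, (hpos α _).le]
  have hN : N ≤ 0 := fun α => by
    by_cases hα : α ∈ s <;> simp [N, hα, hf, hnonpos]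
  have hsplit : H - X = Finsupp.linearCombination ℝ b N + Z := by
    rw [← map_add, Finsupp.filter_add_filter_not, b.linearCombination_repr]
  have hcross : 0 ≤ (inner ℝ Z (Finsupp.linearCombination ℝ b N) : ℝ) :=
    inner_linearCombination_nonneg hP hN fun i hi j hj => hobtuse i j fun hij => by
      simp_all [P, N]
  have hZY : (inner ℝ Z (H - X) : ℝ) ≤ 0 :=
    inner_linearCombination_nonpos hP fun i hi => by
      have hi : i ∉ s := by simp_all [P]
      linarith [hH i hi, hX i, inner_sub_right (𝕜 := ℝ) (b i) H X]
  have hZ : Z = 0 := by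
    rw [hsplit, inner_add_right] at hZY
    exact real_inner_self_nonpos.mp (by linarith)
  have hZα₀ : b.repr Z α₀ = f α₀ := by simp [Z, P, hα₀]
  rw [hZ, map_zero, hf] at hZα₀
  exact (hpos α₀ hα₀).ne hZα₀

/-- Emptiness of `C(P,Q,R,X)` for `X` in the closure of the positive chamber:
for an obtuse basis `(v_α)` with dual basis `(w_α)`, a partition `I = I₁ ⊔ I₂` with
`I₂ ≠ ∅`, and `X` with `⟨v_α, X⟩ ≥ 0` for all `α`, there is no `H` with
`⟨v_α,H⟩ > 0` on `I₁`, `⟨v_α,H⟩ ≤ 0` on `I₂`, `⟨w_α,H-X⟩ > 0` on `I₂` and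
`⟨w_α,H-X⟩ ≤ 0` on `I₁`. -/
theorem stmt8 {V : Type*} [NormedAddCommGroup V] [InnerProductSpace ℝ V]
    [FiniteDimensional ℝ V]
    {ι : Type*} [DecidableEq ι] (b : Module.Basis ι ℝ V)
    (hobtuse : ∀ α β, α ≠ β → (inner ℝ (b α) (b β) : ℝ) ≤ 0)
    (w : ι → V)
    (hdual : ∀ α β, (inner ℝ (b α) (w β) : ℝ) = if α = β then 1 else 0)
    (s : Set ι) (hs : sᶜ.Nonempty)
    (X : V) (hX : ∀ α, 0 ≤ (inner ℝ (b α) X : ℝ)) :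
    ¬ ∃ H : V,
      (∀ α ∈ s, 0 < (inner ℝ (b α) H : ℝ)) ∧
      (∀ α ∉ s, (inner ℝ (b α) H : ℝ) ≤ 0) ∧
      (∀ α ∉ s, 0 < (inner ℝ (w α) (H - X) : ℝ)) ∧
      (∀ α ∈ s, (inner ℝ (w α) (H - X) : ℝ) ≤ 0) :=
  stmt8_general b hobtuse w hdual s hs X hX
end

section
/- Let V be a finite-dimensional real vector space of dimension ≥ 1, let L ⊂ V be a full-rank lattice, and let C ⊆ V be a nonempty open subset stable under multiplication by positive real scalars. Then C contains a primitive vector of L, i.e. a vector v ∈ L ∩ C such that whenever v = n·w with w ∈ L and n a positive integer, one has n = 1. -/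
/-!
Scaling a small ball inside `C` that misses `0` gives balls in `C`, still missing `0`, whose
radius exceeds the covering radius `∑ i, ‖b i‖` of the lattice; so `C` contains a nonzero lattice
point `v`. A nonzero coordinate of `v` is an integer multiple of the same coordinate of any
divisor, so the divisors of `v` in `L` are bounded, and dividing `v` by the largest one yields a
primitive vector, which lies in `C` because `C` is a cone.
-/

open Set Metric Submodule Pointwise

def IsPrimitiveIn {M : Type*} [AddMonoid M] (L : Set M) (v : M) : Prop :=
  ∀ (w : M) (n : ℕ), w ∈ L → 0 < n → v = n • w → n = 1

def divisorsIn {M : Type*} [AddMonoid M] (L : Set M) (v : M) : Set ℕ :=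
  {n | 0 < n ∧ ∃ w ∈ L, v = n • w}

section Divisors

variable {M : Type*} [AddMonoid M] (L : Set M) (v : M)

theorem bddAbove_divisorsIn (f : M →+ ℝ) (hf : ∀ w ∈ L, ∃ k : ℤ, f w = k) (hv : f v ≠ 0) :
    BddAbove (divisorsIn L v) := by
  refine ⟨⌊|f v|⌋₊, fun n ⟨_, w, hw, hvw⟩ => Nat.le_floor ?_⟩
  obtain ⟨k, hk⟩ := hf w hw
  have hfv : f v = n * k := by rw [hvw, map_nsmul, hk, nsmul_eq_mul]
  have hk0 : k ≠ 0 := by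
    rintro rfl
    simp [hfv] at hv
  calc (n : ℝ) = n * 1 := (mul_one _).symm
    _ ≤ n * |(k : ℝ)| := by gcongr; exact_mod_cast Int.one_le_abs hk0
    _ = |f v| := by rw [hfv, abs_mul, Nat.abs_cast]

theorem exists_nsmul_isPrimitiveIn (hv : v ∈ L) (hbdd : BddAbove (divisorsIn L v)) :
    ∃ (n : ℕ) (w : M), 0 < n ∧ w ∈ L ∧ v = n • w ∧ IsPrimitiveIn L w := by
  have hone : 1 ∈ divisorsIn L v := ⟨one_pos, v, hv, (one_nsmul v).symm⟩
  obtain ⟨hN, w, hw, hvw⟩ := Nat.sSup_mem ⟨1, hone⟩ hbdd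
  refine ⟨_, w, hN, hw, hvw, fun u m hu hm hwu => ?_⟩
  have hle : sSup (divisorsIn L v) * m ≤ sSup (divisorsIn L v) :=
    le_csSup hbdd ⟨Nat.mul_pos hN hm, u, hu, by rw [mul_nsmul', ← hwu, ← hvw]⟩
  exact le_antisymm ((mul_le_iff_le_one_right hN).mp hle) hm

end Divisors

section Cone

variable {E : Type*} [NormedAddCommGroup E] [NormedSpace ℝ E] {C : Set E}

theorem exists_ball_subset_zero_notMem_of_isOpen_of_smul_mem [Nontrivial E] (hCopen : IsOpen C)
    (hC0 : C.Nonempty) (hCcone : ∀ r : ℝ, 0 < r → ∀ x ∈ C, r • x ∈ C) (R : ℝ) :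
    ∃ y, ball y R ⊆ C ∧ (0 : E) ∉ ball y R := by
  obtain ⟨x, hx0, hxC⟩ := (dense_compl_singleton (0 : E)).exists_mem_open hCopen hC0
  obtain ⟨ε, hε, hballC⟩ := isOpen_iff.mp hCopen x hxC
  set δ := min ε ‖x‖
  have hδ : 0 < δ := lt_min hε (norm_pos_iff.mpr hx0)
  set r := (|R| + 1) / δ
  have hr : 0 < r := by positivity
  have hball : ball (r • x) R ⊆ r • ball x δ := by
    rw [_root_.smul_ball hr.ne', Real.norm_of_nonneg hr.le, div_mul_cancel₀ _ hδ.ne']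
    exact ball_subset_ball (by linarith [le_abs_self R])
  refine ⟨r • x, fun z hz => ?_, fun h0 => ?_⟩
  · obtain ⟨y, hy, rfl⟩ := hball hz
    exact hCcone r hr y (hballC (ball_subset_ball (min_le_left _ _) hy))
  · obtain ⟨y, hy, hy0⟩ := hball h0
    rw [smul_eq_zero_iff_right hr.ne'] at hy0
    rw [hy0, mem_ball, dist_zero_left] at hy
    exact (min_le_right ε ‖x‖).not_gt hy

end Cone

theorem ZSpan.exists_dist_le {E ι : Type*} [NormedAddCommGroup E] [NormedSpace ℝ E] [Fintype ι]
    (b : Module.Basis ι ℝ E) (y : E) : ∃ v ∈ span ℤ (range b), dist v y ≤ ∑ i, ‖b i‖ :=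
  ⟨floor b y, (floor b y).2, by rw [dist_comm, dist_eq_norm, ← fract_apply]; exact norm_fract_le b y⟩

/-- A nonempty open cone in a finite-dimensional real vector space of dimension ≥ 1
contains a primitive vector of any full-rank lattice. -/
theorem stmt17 {V : Type*} [NormedAddCommGroup V] [NormedSpace ℝ V]
    [FiniteDimensional ℝ V] (hdim : 1 ≤ Module.finrank ℝ V)
    {ι : Type*} [Fintype ι] (b : Module.Basis ι ℝ V)
    (L : AddSubgroup V) (hL : L = AddSubgroup.closure (Set.range ⇑b))
    (C : Set V) (hC0 : C.Nonempty) (hCopen : IsOpen C)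
    (hCcone : ∀ r : ℝ, 0 < r → ∀ x ∈ C, r • x ∈ C) :
    ∃ v ∈ L, v ∈ C ∧ ∀ (w : V) (n : ℕ), w ∈ L → 0 < n → v = n • w → n = 1 := by
  have : Nontrivial V := Module.nontrivial_of_finrank_pos (R := ℝ) (by omega)
  rw [hL, ← span_int_eq_addSubgroupClosure]
  obtain ⟨y, hyC, hy0⟩ :=
    exists_ball_subset_zero_notMem_of_isOpen_of_smul_mem hCopen hC0 hCcone (∑ i, ‖b i‖ + 1)
  obtain ⟨v, hvL, hvy⟩ := ZSpan.exists_dist_le b y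
  have hvball : v ∈ ball y (∑ i, ‖b i‖ + 1) := by rw [mem_ball]; linarith
  obtain ⟨i, hi⟩ := Finsupp.ne_iff.mp (b.repr.map_ne_zero_iff.mpr fun h => hy0 (h ▸ hvball))
  have hcoord : ∀ w ∈ span ℤ (range b), ∃ k : ℤ, (b.coord i).toAddMonoidHom w = k := by
    intro w hw
    obtain ⟨k, hk⟩ := (b.mem_span_iff_repr_mem ℤ w).mp hw i
    exact ⟨k, by simpa using hk.symm⟩
  obtain ⟨n, w, hn, hwL, rfl, hw⟩ :=
    exists_nsmul_isPrimitiveIn _ v hvL (bddAbove_divisorsIn _ v _ hcoord hi)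
  refine ⟨w, hwL, ?_, hw⟩
  have := hCcone (n : ℝ)⁻¹ (by positivity) _ (hyC hvball)
  rwa [← Nat.cast_smul_eq_nsmul ℝ, smul_smul, inv_mul_cancel₀ (by positivity), one_smul] at this
end
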